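/- arXiv:2301.04063 — 2 statements merged into one kernel-verified Lean document; each statement's English description precedes it below -/
import Mathlib

section
/- Let q be an odd prime power, χ the quadratic character of F_q, r ∈ F_q^*, m ≥ 2, and ε = (ε_{i,j})_{1 ≤ i < j ≤ m} ∈ {0,1}^{m(m−1)/2}. For b ∈ F_q^*, the map (a_1, a_2, …, a_m) ↦ (a_1 b^{−1}, a_2 b, …, a_m b) is a bijection of (F_q^*)^m, and consequently R(ε) = (q−1)^{−1} ∑_{(a_2,…,a_m) ∈ (F_q^*)^{m−1}} S(a_2,…,a_m) · T(a_2,…,a_m), where S(a_2,…,a_m) = ∑_{a_1 ∈ F_q^*} χ(∏_{2 ≤ j ≤ m} (a_1 a_j + r)^{ε_{1,j}}) and T(a_2,…,a_m) = ∑_{b ∈ F_q^*} χ(∏_{2 ≤ i < j ≤ m} (a_i a_j b^2 + r)^{ε_{i,j}}). -/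
/-- Let `F` be a finite field of odd cardinality `q` (an odd prime power), `χ` its
quadratic character, `r ∈ F^*`, `m ≥ 2`, and `ε = (ε_{i,j})_{i<j}` with entries in
`{0,1}` (indexed from `0` here). For `b ∈ F^*`, the map
`(a_1, a_2, …, a_m) ↦ (a_1 b^{−1}, a_2 b, …, a_m b)` is a bijection of `(F^*)^m`, and
consequently
`R(ε) = (q−1)^{−1} ∑_{(a_2,…,a_m) ∈ (F^*)^{m−1}} S(a_2,…,a_m) · T(a_2,…,a_m)`,
where `S(a_2,…,a_m) = ∑_{a_1 ∈ F^*} χ(∏_{2 ≤ j ≤ m} (a_1 a_j + r)^{ε_{1,j}})` and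
`T(a_2,…,a_m) = ∑_{b ∈ F^*} χ(∏_{2 ≤ i < j ≤ m} (a_i a_j b^2 + r)^{ε_{i,j}})`.
The `(m−1)`-tuples `(a_2,…,a_m) ∈ (F^*)^{m−1}` are encoded as tuples
`c : Fin m → F` with `c 0 = 1` and `c i ≠ 0` for `i ≠ 0`. -/
theorem char_sum_factorization (F : Type) [Field F] [Fintype F] [DecidableEq F]
    (hq : Odd (Fintype.card F)) (r : F) (hr : r ≠ 0) (m : ℕ) (hm : 2 ≤ m)
    (ε : Fin m → Fin m → ℕ) (hε : ∀ i j : Fin m, ε i j ≤ 1) :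
    (∀ b : Fˣ, Function.Bijective (fun a : Fin m → Fˣ => fun i : Fin m =>
        if i = (⟨0, by omega⟩ : Fin m) then a i * b⁻¹ else a i * b))
    ∧
    ((∑ a ∈ Finset.univ.filter (fun a : Fin m → F => ∀ i, a i ≠ 0),
        ∏ i : Fin m, ∏ j ∈ Finset.Ioi i,
          (quadraticChar F (a i * a j + r)) ^ (ε i j) : ℤ) : ℚ)
      = ((Fintype.card F : ℚ) - 1)⁻¹ *
          ∑ c ∈ Finset.univ.filter (fun c : Fin m → F =>
              c ⟨0, by omega⟩ = 1 ∧ ∀ i : Fin m, i ≠ ⟨0, by omega⟩ → c i ≠ 0),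
            ((∑ x ∈ Finset.univ.filter (fun x : F => x ≠ 0),
                quadraticChar F (∏ j ∈ Finset.Ioi (⟨0, by omega⟩ : Fin m),
                  (x * c j + r) ^ (ε ⟨0, by omega⟩ j)) : ℤ) : ℚ) *
            ((∑ b ∈ Finset.univ.filter (fun x : F => x ≠ 0),
                quadraticChar F (∏ i ∈ Finset.Ioi (⟨0, by omega⟩ : Fin m),
                  ∏ j ∈ Finset.Ioi i,
                    (c i * c j * b ^ 2 + r) ^ (ε i j)) : ℤ) : ℚ) := by
  classical
  have hm0 : 0 < m := by omega
  constructor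
  · intro b
    rw [Function.bijective_iff_has_inverse]
    refine ⟨fun a i => if i = (⟨0, by omega⟩ : Fin m) then a i * b else a i * b⁻¹, ?_, ?_⟩
    · intro a; funext i; by_cases h : i = (⟨0, by omega⟩ : Fin m) <;> simp [h, mul_assoc]
    · intro a; funext i; by_cases h : i = (⟨0, by omega⟩ : Fin m) <;> simp [h, mul_assoc]
  · set i0 : Fin m := ⟨0, hm0⟩ with hi0
    set χ := quadraticChar F with hχ
    set X : Finset F := Finset.univ.filter (fun x => x ≠ 0) with hX
    set A : Finset (Fin m → F) := Finset.univ.filter (fun a => ∀ i, a i ≠ 0) with hA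
    set C : Finset (Fin m → F) :=
      Finset.univ.filter (fun c => c i0 = 1 ∧ ∀ i : Fin m, i ≠ i0 → c i ≠ 0) with hC
    set P : (Fin m → F) → F :=
      fun a => ∏ i : Fin m, ∏ j ∈ Finset.Ioi i, (a i * a j + r) ^ (ε i j) with hP
    set Q1 : (Fin m → F) → F :=
      fun a => ∏ j ∈ Finset.Ioi i0, (a i0 * a j + r) ^ (ε i0 j) with hQ1
    set Q2 : (Fin m → F) → F → F :=
      fun a b => ∏ i ∈ Finset.Ioi i0, ∏ j ∈ Finset.Ioi i, (a i * a j * b ^ 2 + r) ^ (ε i j)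
      with hQ2
    set S : (Fin m → F) → ℤ :=
      fun c => ∑ x ∈ X, χ (∏ j ∈ Finset.Ioi i0, (x * c j + r) ^ (ε i0 j)) with hS
    set T : (Fin m → F) → ℤ := fun c => ∑ b ∈ X, χ (Q2 c b) with hT
    -- basic facts
    have hne0 : ∀ j : Fin m, j ∈ Finset.Ioi i0 → j ≠ i0 :=
      fun j hj => ne_of_gt (Finset.mem_Ioi.mp hj)
    have hIoiE : Finset.Ioi i0 = Finset.univ.erase i0 := by
      ext j
      simp only [Finset.mem_Ioi, Finset.mem_erase, Finset.mem_univ, and_true, ne_eq,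
        Fin.lt_def, Fin.ext_iff]
      show 0 < (j : ℕ) ↔ ¬(j : ℕ) = 0
      omega
    have hpow : ∀ (x : F) (n : ℕ), n ≤ 1 → (χ x) ^ n = χ (x ^ n) := by
      intro x n hn
      interval_cases n <;> simp
    have hPsplit : ∀ a : Fin m → F,
        P a = (∏ j ∈ Finset.Ioi i0, (a i0 * a j + r) ^ (ε i0 j)) *
          ∏ i ∈ Finset.Ioi i0, ∏ j ∈ Finset.Ioi i, (a i * a j + r) ^ (ε i j) := by
      intro a
      show (∏ i : Fin m, ∏ j ∈ Finset.Ioi i, (a i * a j + r) ^ (ε i j)) = _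
      rw [← Finset.mul_prod_erase Finset.univ _ (Finset.mem_univ i0), ← hIoiE]
    -- LHS rewrite: pow inside χ
    have hL : (∑ a ∈ A, ∏ i : Fin m, ∏ j ∈ Finset.Ioi i,
        (χ (a i * a j + r)) ^ (ε i j)) = ∑ a ∈ A, χ (P a) := by
      refine Finset.sum_congr rfl fun a _ => ?_
      show _ = χ (∏ i : Fin m, ∏ j ∈ Finset.Ioi i, (a i * a j + r) ^ (ε i j))
      rw [map_prod]
      refine Finset.prod_congr rfl fun i _ => ?_
      rw [map_prod]
      exact Finset.prod_congr rfl fun j _ => hpow _ _ (hε i j)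
    -- per-b reindexing
    have hbstep : ∀ b : F, b ≠ 0 →
        (∑ a ∈ A, χ (P a)) = ∑ a ∈ A, χ (Q1 a) * χ (Q2 a b) := by
      intro b hb
      have hbb : b * b⁻¹ = 1 := mul_inv_cancel₀ hb
      have hbb' : b⁻¹ * b = 1 := inv_mul_cancel₀ hb
      refine Finset.sum_nbij'
        (i := fun a k => if k = i0 then a k * b else a k * b⁻¹)
        (j := fun a k => if k = i0 then a k * b⁻¹ else a k * b) ?_ ?_ ?_ ?_ ?_
      · intro a ha
        rw [hA, Finset.mem_filter] at ha
        show (fun k => if k = i0 then a k * b else a k * b⁻¹) ∈ A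
        rw [hA, Finset.mem_filter]
        refine ⟨Finset.mem_univ _, fun k => ?_⟩
        by_cases h : k = i0 <;> simp only [h, ite_true, ite_false, if_pos, if_neg] <;>
          exact mul_ne_zero (ha.2 _) (by simp [hb])
      · intro a ha
        rw [hA, Finset.mem_filter] at ha
        show (fun k => if k = i0 then a k * b⁻¹ else a k * b) ∈ A
        rw [hA, Finset.mem_filter]
        refine ⟨Finset.mem_univ _, fun k => ?_⟩
        by_cases h : k = i0 <;> simp only [h, ite_true, ite_false, if_pos, if_neg] <;>
          exact mul_ne_zero (ha.2 _) (by simp [hb])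
      · intro a _; funext k
        by_cases h : k = i0 <;> simp [h, mul_assoc, hbb, hbb']
      · intro a _; funext k
        by_cases h : k = i0 <;> simp [h, mul_assoc, hbb, hbb']
      · intro a _
        show χ (P a) = χ (Q1 (fun k => if k = i0 then a k * b else a k * b⁻¹)) *
            χ (Q2 (fun k => if k = i0 then a k * b else a k * b⁻¹) b)
        have key : P a = Q1 (fun k => if k = i0 then a k * b else a k * b⁻¹) *
            Q2 (fun k => if k = i0 then a k * b else a k * b⁻¹) b := by
          rw [hPsplit a]
          show _ = (∏ j ∈ Finset.Ioi i0,
              ((if i0 = i0 then a i0 * b else a i0 * b⁻¹) *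
                (if j = i0 then a j * b else a j * b⁻¹) + r) ^ (ε i0 j)) *
            ∏ i ∈ Finset.Ioi i0, ∏ j ∈ Finset.Ioi i,
              ((if i = i0 then a i * b else a i * b⁻¹) *
                (if j = i0 then a j * b else a j * b⁻¹) * b ^ 2 + r) ^ (ε i j)
          congr 1
          · refine Finset.prod_congr rfl fun j hj => ?_
            rw [if_pos rfl, if_neg (hne0 j hj)]
            have hbase : a i0 * b * (a j * b⁻¹) = a i0 * a j := by
              calc a i0 * b * (a j * b⁻¹) = a i0 * a j * (b * b⁻¹) := by ring
                _ = a i0 * a j := by rw [hbb, mul_one]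
            rw [hbase]
          · refine Finset.prod_congr rfl fun i hi => ?_
            refine Finset.prod_congr rfl fun j hj => ?_
            have hj' : j ≠ i0 :=
              hne0 j (Finset.mem_Ioi.mpr (lt_trans (Finset.mem_Ioi.mp hi) (Finset.mem_Ioi.mp hj)))
            rw [if_neg (hne0 i hi), if_neg hj']
            have hbase : a i * b⁻¹ * (a j * b⁻¹) * b ^ 2 = a i * a j := by
              calc a i * b⁻¹ * (a j * b⁻¹) * b ^ 2
                  = a i * a j * ((b⁻¹ * b) * (b⁻¹ * b)) := by ring
                _ = a i * a j := by rw [hbb', one_mul, mul_one]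
            rw [hbase]
        rw [key, map_mul]
    -- main combinatorial identity over ℤ
    have key : (X.card : ℤ) * (∑ a ∈ A, χ (P a)) = ∑ c ∈ C, S c * T c := by
      calc (X.card : ℤ) * (∑ a ∈ A, χ (P a))
          = ∑ _b ∈ X, ∑ a ∈ A, χ (P a) := by
            rw [Finset.sum_const, nsmul_eq_mul]
        _ = ∑ b ∈ X, ∑ a ∈ A, χ (Q1 a) * χ (Q2 a b) := by
            refine Finset.sum_congr rfl fun b hb => ?_
            exact hbstep b (by simpa [hX] using hb)
        _ = ∑ a ∈ A, ∑ b ∈ X, χ (Q1 a) * χ (Q2 a b) := Finset.sum_comm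
        _ = ∑ a ∈ A, χ (Q1 a) * T a := by
            refine Finset.sum_congr rfl fun a _ => ?_
            show _ = χ (Q1 a) * ∑ b ∈ X, χ (Q2 a b)
            rw [Finset.mul_sum]
        _ = ∑ p ∈ C ×ˢ X,
              χ (∏ j ∈ Finset.Ioi i0, (p.2 * p.1 j + r) ^ (ε i0 j)) * T p.1 := by
            refine Finset.sum_nbij'
              (i := fun a => (Function.update a i0 1, a i0))
              (j := fun p => Function.update p.1 i0 p.2) ?_ ?_ ?_ ?_ ?_
            · intro a ha
              rw [hA, Finset.mem_filter] at ha
              show (Function.update a i0 1, a i0) ∈ C ×ˢ X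
              rw [Finset.mem_product, hC, hX, Finset.mem_filter, Finset.mem_filter]
              refine ⟨⟨Finset.mem_univ _, ?_, fun i hi => ?_⟩,
                Finset.mem_univ _, ha.2 i0⟩
              · show Function.update a i0 1 i0 = 1
                rw [Function.update_self]
              · show Function.update a i0 1 i ≠ 0
                rw [Function.update_of_ne hi]
                exact ha.2 i
            · intro p hp
              rw [Finset.mem_product, hC, hX, Finset.mem_filter, Finset.mem_filter] at hp
              show Function.update p.1 i0 p.2 ∈ A
              rw [hA, Finset.mem_filter]
              refine ⟨Finset.mem_univ _, fun i => ?_⟩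
              by_cases h : i = i0
              · rw [h, Function.update_self]; exact hp.2.2
              · rw [Function.update_of_ne h]; exact hp.1.2.2 i h
            · intro a _
              show Function.update (Function.update a i0 1) i0 (a i0) = a
              rw [Function.update_idem]
              exact Function.update_eq_self _ _
            · intro p hp
              rw [Finset.mem_product, hC, Finset.mem_filter] at hp
              show (Function.update (Function.update p.1 i0 p.2) i0 1,
                Function.update p.1 i0 p.2 i0) = p
              rw [Function.update_idem, Function.update_self]
              have h1 : Function.update p.1 i0 1 = p.1 := by
                rw [← hp.1.2.1]
                exact Function.update_eq_self _ _
              rw [h1]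
            · intro a ha
              rw [hA, Finset.mem_filter] at ha
              show χ (Q1 a) * T a =
                χ (∏ j ∈ Finset.Ioi i0, (a i0 * Function.update a i0 1 j + r) ^ (ε i0 j)) *
                  T (Function.update a i0 1)
              have h1 : Q1 a = ∏ j ∈ Finset.Ioi i0,
                  (a i0 * Function.update a i0 1 j + r) ^ (ε i0 j) := by
                show (∏ j ∈ Finset.Ioi i0, (a i0 * a j + r) ^ (ε i0 j)) = _
                refine Finset.prod_congr rfl fun j hj => ?_
                rw [Function.update_of_ne (hne0 j hj)]
              have h2 : T a = T (Function.update a i0 1) := by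
                show (∑ b ∈ X, χ (Q2 a b)) = ∑ b ∈ X, χ (Q2 (Function.update a i0 1) b)
                refine Finset.sum_congr rfl fun b _ => ?_
                congr 1
                show (∏ i ∈ Finset.Ioi i0, ∏ j ∈ Finset.Ioi i,
                    (a i * a j * b ^ 2 + r) ^ (ε i j)) = _
                refine Finset.prod_congr rfl fun i hi => ?_
                refine Finset.prod_congr rfl fun j hj => ?_
                have hj' : j ≠ i0 :=
                  hne0 j (Finset.mem_Ioi.mpr
                    (lt_trans (Finset.mem_Ioi.mp hi) (Finset.mem_Ioi.mp hj)))
                rw [Function.update_of_ne (hne0 i hi), Function.update_of_ne hj']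
              rw [h1, h2]
        _ = ∑ c ∈ C, ∑ x ∈ X,
              χ (∏ j ∈ Finset.Ioi i0, (x * c j + r) ^ (ε i0 j)) * T c := by
            rw [Finset.sum_product]
        _ = ∑ c ∈ C, S c * T c := by
            refine Finset.sum_congr rfl fun c _ => ?_
            show _ = (∑ x ∈ X, χ (∏ j ∈ Finset.Ioi i0, (x * c j + r) ^ (ε i0 j))) * T c
            rw [Finset.sum_mul]
    -- cardinality and final division
    have hcard : (X.card : ℚ) = (Fintype.card F : ℚ) - 1 := by
      have hXe : X = Finset.univ.erase (0 : F) := by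
        rw [hX]; ext x; simp [Finset.mem_erase, and_comm]
      rw [hXe, Finset.card_erase_of_mem (Finset.mem_univ _), Finset.card_univ]
      have h1 : 1 ≤ Fintype.card F := Fintype.card_pos
      push_cast [Nat.cast_sub h1]
      ring
    have hq1 : ((Fintype.card F : ℚ) - 1) ≠ 0 := by
      have h2 : 1 < Fintype.card F := Fintype.one_lt_card
      have h3 : (1 : ℚ) < (Fintype.card F : ℚ) := by exact_mod_cast h2
      exact ne_of_gt (sub_pos.mpr h3)
    show ((∑ a ∈ A, ∏ i : Fin m, ∏ j ∈ Finset.Ioi i,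
        (χ (a i * a j + r)) ^ (ε i j) : ℤ) : ℚ)
      = ((Fintype.card F : ℚ) - 1)⁻¹ * ∑ c ∈ C, ((S c : ℤ) : ℚ) * ((T c : ℤ) : ℚ)
    rw [eq_inv_mul_iff_mul_eq₀ hq1, hL, ← hcard]
    exact_mod_cast key
end

section
/- For every integer m ≥ 4 there exists a constant C = C(m) > 0 such that for every odd prime power q and every r ∈ F_q^*, the number N_r(m,q) of Diophantine m-tuples in F_q with shift r satisfies |N_r(m,q) − 2^{−m(m−1)/2} q^m| ≤ C q^{m−1/2}. -/
/-!
Let `χ` be the real-valued quadratic character of `F`. Off `0`, the indicator of the squares is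
`(1 + χ t) / 2`, so the count differs from `∑ a, ∏_{i<j} (1 + χ (a i * a j + r)) / 2` by at most
the number of tuples with some `a i * a j + r = 0`, which is `O(q ^ (m - 1))`. Expanding the
product over subsets `t` of the edges `i < j`, the empty set gives the main term
`q ^ m / 2 ^ (m(m-1)/2)`. For nonempty `t`, summing first over the coordinate of the smallest
vertex `i` of `t` leaves a bounded factor times `T a = ∑ x, ∏_{(i,j) ∈ t} χ (x * a j + r)`, so by
Cauchy–Schwarz it suffices that `∑ a, T a ^ 2 ≤ 2 q ^ (m + 1)`. Expanding the square reduces this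
to the sums `∑ u, χ ((x * u + r) * (y * u + r))`, bounded by `q` for `x = y` and, being Jacobi
sums, by `1` for `x ≠ y`.
-/

open Finset

lemma Fintype.sum_comp_mul_add {F R : Type*} [Field F] [Fintype F] [AddCommMonoid R]
    (g : F → R) {a : F} (ha : a ≠ 0) (b : F) :
    ∑ t, g (a * t + b) = ∑ u, g u :=
  Fintype.sum_bijective _ ((Equiv.addRight b).bijective.comp (mulLeft_bijective₀ a ha)) _ _
    fun _ ↦ rfl

section FunctionSpace

variable {ι α R : Type*} [Fintype ι] [DecidableEq ι] [Fintype α]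

lemma Fintype.sum_sum_update [AddCommMonoid R] (f : (ι → α) → R) (i : ι) :
    ∑ a, ∑ x, f (Function.update a i x) = Fintype.card α • ∑ a, f a := by
  let e : Equiv.Perm ((ι → α) × α) :=
    Function.Involutive.toPerm (fun p ↦ (Function.update p.1 i p.2, p.1 i)) fun p ↦ by simp
  calc ∑ a, ∑ x, f (Function.update a i x) = ∑ p, f (e p).1 := (Fintype.sum_prod_type' _).symm
    _ = ∑ p : (ι → α) × α, f p.1 := Equiv.sum_comp e fun p ↦ f p.1
    _ = Fintype.card α • ∑ a, f a := by
        rw [Fintype.sum_prod_type, smul_sum]; simp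

lemma Fintype.sum_prod_apply [CommSemiring R] (s : Finset ι) (g : α → R) :
    ∑ a : ι → α, ∏ j ∈ s, g (a j) =
      (∑ t, g t) ^ #s * (Fintype.card α : R) ^ (Fintype.card ι - #s) := by
  simp_rw [← Fintype.prod_ite_mem s]
  refine (Fintype.prod_sum fun j t ↦ if j ∈ s then g t else 1).symm.trans ?_
  simp [prod_ite, Finset.filter_not, card_univ_sdiff]

end FunctionSpace

lemma card_filter_mul_add_eq_zero_mul_le {ι F : Type*} [Fintype ι] [DecidableEq ι] [Field F]
    [Fintype F] [DecidableEq F] {r : F} (hr : r ≠ 0) {i j : ι} (hij : i ≠ j) :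
    #{a : ι → F | a i * a j + r = 0} * Fintype.card F ≤ Fintype.card F ^ Fintype.card ι := by
  have hroot : ∀ a : ι → F, #{x : F | a i * x + r = 0} ≤ 1 := fun a ↦ by
    refine card_le_one.mpr fun x hx y hy ↦ ?_
    simp only [mem_filter, mem_univ, true_and] at hx hy
    have hai : a i ≠ 0 := by rintro h; simp [h, hr] at hx
    exact mul_left_cancel₀ hai (by linear_combination hx - hy)
  calc #{a : ι → F | a i * a j + r = 0} * Fintype.card F
      = ∑ a : ι → F, ∑ x, if (Function.update a j x) i * (Function.update a j x) j + r = 0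
          then 1 else 0 := by
        rw [Fintype.sum_sum_update (fun a ↦ if a i * a j + r = 0 then 1 else 0), card_filter,
          smul_eq_mul, mul_comm]
    _ ≤ ∑ _a : ι → F, 1 := by
        refine sum_le_sum fun a _ ↦ ?_
        have := hroot a
        rw [card_filter] at this
        simpa only [Function.update_of_ne hij, Function.update_self] using this
    _ = Fintype.card F ^ Fintype.card ι := by simp

lemma abs_prod_sub_prod_le_card_filter_ne {κ : Type*} {s : Finset κ} {f g : κ → ℝ}
    (hf : ∀ e ∈ s, 0 ≤ f e ∧ f e ≤ 1) (hg : ∀ e ∈ s, 0 ≤ g e ∧ g e ≤ 1) :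
    |∏ e ∈ s, f e - ∏ e ∈ s, g e| ≤ #{e ∈ s | f e ≠ g e} := by
  rcases (s.filter fun e ↦ f e ≠ g e).eq_empty_or_nonempty with h | h
  · rw [prod_congr rfl fun e he ↦ not_not.mp (filter_eq_empty_iff.mp h he), sub_self, abs_zero]
    positivity
  · have hf1 := prod_le_one (fun e he ↦ (hf e he).1) fun e he ↦ (hf e he).2
    have hg1 := prod_le_one (fun e he ↦ (hg e he).1) fun e he ↦ (hg e he).2
    have hf0 := prod_nonneg fun e he ↦ (hf e he).1
    have hg0 := prod_nonneg fun e he ↦ (hg e he).1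
    have h1 : |∏ e ∈ s, f e - ∏ e ∈ s, g e| ≤ 1 := abs_sub_le_iff.mpr ⟨by linarith, by linarith⟩
    exact h1.trans (Nat.one_le_cast.mpr h.card_pos)

noncomputable def realQuadraticChar (F : Type*) [Field F] [Fintype F] [DecidableEq F] :
    MulChar F ℝ :=
  (quadraticChar F).ringHomComp (Int.castRingHom ℝ)

namespace realQuadraticChar

variable {F : Type*} [Field F] [Fintype F] [DecidableEq F]

local notation "χ" => realQuadraticChar F

lemma isQuadratic : (χ).IsQuadratic :=
  (quadraticChar_isQuadratic F).comp _

lemma abs_le_one (t : F) : |χ t| ≤ 1 := by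
  rcases isQuadratic t with h | h | h <;> simp [h]

lemma apply_sq {t : F} (ht : t ≠ 0) : χ (t ^ 2) = 1 := by
  simp [realQuadraticChar, quadraticChar_sq_one' ht]

lemma ne_one (hF : ringChar F ≠ 2) : χ ≠ 1 :=
  (MulChar.ringHomComp_ne_one_iff Int.cast_injective).mpr (quadraticChar_ne_one hF)

lemma indicator_isSquare_eq {t : F} (ht : t ≠ 0) :
    (if IsSquare t then (1 : ℝ) else 0) = (1 + χ t) / 2 := by
  by_cases hs : IsSquare t
  · simp [hs, realQuadraticChar, (quadraticChar_one_iff_isSquare ht).mpr hs]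
  · simp [hs, realQuadraticChar, quadraticChar_neg_one_iff_not_isSquare.mpr hs]

lemma sum_mul_add_eq_zero (hF : ringChar F ≠ 2) {a : F} (ha : a ≠ 0) (b : F) :
    ∑ t, χ (a * t + b) = 0 := by
  rw [Fintype.sum_comp_mul_add _ ha, MulChar.sum_eq_zero_of_ne_one (ne_one hF)]

lemma sum_mul_add_self_eq_neg_one (hF : ringChar F ≠ 2) {w : F} (hw : w ≠ 0) :
    ∑ u, χ (u * (u + w)) = -1 := by
  have hw' : -w ≠ 0 := neg_ne_zero.mpr hw
  have hJ : jacobiSum χ χ = -χ (-1) := by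
    simpa only [isQuadratic.inv] using jacobiSum_nontrivial_inv (ne_one hF)
  calc ∑ u, χ (u * (u + w))
      = ∑ x, χ (-w * x * (-w * x + w)) := by
        simpa using (Fintype.sum_comp_mul_add (fun u ↦ χ (u * (u + w))) hw' 0).symm
    _ = ∑ x, χ (-1) * (χ x * χ (1 - x)) := by
        refine Fintype.sum_congr _ _ fun x ↦ ?_
        rw [show -w * x * (-w * x + w) = -1 * w ^ 2 * (x * (1 - x)) by ring]
        simp only [map_mul, apply_sq hw, mul_one]
    _ = -1 := by
        rw [← mul_sum, ← jacobiSum, hJ, mul_neg, ← map_mul]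
        norm_num

lemma abs_sum_mul_add_mul_mul_add_le_one (hF : ringChar F ≠ 2) {a b c d : F}
    (hdet : a * d - b * c ≠ 0) :
    |∑ t, χ ((a * t + b) * (c * t + d))| ≤ 1 := by
  rcases eq_or_ne a 0 with rfl | ha
  · have hc : c ≠ 0 := by rintro rfl; simp at hdet
    simp only [zero_mul, zero_add, map_mul, ← mul_sum, sum_mul_add_eq_zero hF hc, mul_zero,
      abs_zero, zero_le_one]
  rcases eq_or_ne c 0 with rfl | hc
  · simp only [zero_mul, zero_add, map_mul, ← sum_mul, sum_mul_add_eq_zero hF ha, zero_mul,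
      abs_zero, zero_le_one]
  have hw : (a * d - b * c) / c ≠ 0 := div_ne_zero hdet hc
  have key : ∀ t, (a * t + b) * (c * t + d) =
      c / a * ((a * t + b) * ((a * t + b) + (a * d - b * c) / c)) := fun t ↦ by
    field_simp; ring
  rw [Fintype.sum_congr _ _ fun t ↦ by rw [key, map_mul], ← mul_sum]
  rw [Fintype.sum_comp_mul_add (fun u ↦ χ (u * (u + (a * d - b * c) / c))) ha,
    sum_mul_add_self_eq_neg_one hF hw, abs_mul, abs_neg, abs_one, mul_one]
  exact abs_le_one _

lemma sum_sq_sum_prod_mul_add_le (hF : ringChar F ≠ 2) {r : F} (hr : r ≠ 0) {ι : Type*}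
    [Fintype ι] [DecidableEq ι] {s : Finset ι} (hs : s.Nonempty) :
    ∑ a : ι → F, (∑ x, ∏ j ∈ s, χ (x * a j + r)) ^ 2 ≤
      2 * (Fintype.card F : ℝ) ^ (Fintype.card ι + 1) := by
  set q : ℝ := (Fintype.card F : ℝ)
  set n := Fintype.card ι
  set S : F → F → ℝ := fun x y ↦ ∑ t, χ ((x * t + r) * (y * t + r))
  have hq : 1 ≤ q := Nat.one_le_cast.mpr Fintype.card_pos
  have hsn : #s ≤ n := card_le_univ s
  have hs1 : 1 ≤ #s := hs.card_pos
  have pow_le {x B : ℝ} (hx : |x| ≤ B) : x ^ #s * q ^ (n - #s) ≤ B ^ #s * q ^ (n - #s) := by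
    refine mul_le_mul_of_nonneg_right ((le_abs_self _).trans ?_) (by positivity)
    rw [abs_pow]
    exact pow_le_pow_left₀ (abs_nonneg x) hx _
  have expand : ∑ a : ι → F, (∑ x, ∏ j ∈ s, χ (x * a j + r)) ^ 2 =
      ∑ x, ∑ y, S x y ^ #s * q ^ (n - #s) := by
    simp_rw [sq, sum_mul_sum, ← prod_mul_distrib, ← map_mul]
    rw [sum_comm]
    refine sum_congr rfl fun x _ ↦ ?_
    rw [sum_comm]
    exact sum_congr rfl fun y _ ↦
      Fintype.sum_prod_apply s fun t ↦ χ ((x * t + r) * (y * t + r))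
  have term_le (x y : F) :
      S x y ^ #s * q ^ (n - #s) ≤ (if x = y then q ^ n else 0) + q ^ (n - 1) := by
    split_ifs with hxy
    · have hS : |S x y| ≤ q := (abs_sum_le_sum_abs _ _).trans <|
        (sum_le_sum fun t _ ↦ abs_le_one _).trans (by simp [q])
      calc S x y ^ #s * q ^ (n - #s) ≤ q ^ #s * q ^ (n - #s) := pow_le hS
        _ = q ^ n := by rw [← pow_add, Nat.add_sub_cancel' hsn]
        _ ≤ q ^ n + q ^ (n - 1) := le_add_of_nonneg_right (by positivity)
    · have hS : |S x y| ≤ 1 :=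
        abs_sum_mul_add_mul_mul_add_le_one hF (by
          rw [show x * r - r * y = r * (x - y) by ring]
          exact mul_ne_zero hr (sub_ne_zero.mpr hxy))
      calc S x y ^ #s * q ^ (n - #s) ≤ 1 ^ #s * q ^ (n - #s) := pow_le hS
        _ ≤ 0 + q ^ (n - 1) := by rw [one_pow, one_mul, zero_add]; gcongr
  calc ∑ a : ι → F, (∑ x, ∏ j ∈ s, χ (x * a j + r)) ^ 2
      ≤ ∑ x : F, ∑ y : F, ((if x = y then q ^ n else 0) + q ^ (n - 1)) := by
        rw [expand]; gcongr with x _ y _; exact term_le x y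
    _ = 2 * q ^ (n + 1) := by
        simp only [sum_add_distrib, sum_ite_eq, mem_univ, if_true, sum_const, card_univ,
          nsmul_eq_mul]
        change q * q ^ n + q * (q * q ^ (n - 1)) = 2 * q ^ (n + 1)
        rw [← pow_succ' q (n - 1), Nat.sub_add_cancel (hs1.trans hsn)]
        ring

lemma sq_card_mul_sum_prod_mul_add_le (hF : ringChar F ≠ 2) {r : F} (hr : r ≠ 0) {ι : Type*}
    [Fintype ι] [LinearOrder ι] {t : Finset (ι × ι)} (ht : t.Nonempty)
    (hlt : ∀ e ∈ t, e.1 < e.2) :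
    ((Fintype.card F : ℝ) * ∑ a : ι → F, ∏ e ∈ t, χ (a e.1 * a e.2 + r)) ^ 2 ≤
      2 * (Fintype.card F : ℝ) ^ (2 * Fintype.card ι + 1) := by
  set q : ℝ := (Fintype.card F : ℝ)
  set n := Fintype.card ι
  -- every edge of `t` through its smallest vertex `i` has the form `(i, j)`
  set i := (t.image Prod.fst).min' (ht.image _)
  have hi : ∀ e ∈ t, i ≤ e.1 := fun e he ↦ min'_le _ _ (mem_image_of_mem _ he)
  set N := (t.filter (·.1 = i)).image Prod.snd
  set R : (ι → F) → ℝ := fun a ↦ ∏ e ∈ t.filter (·.1 ≠ i), χ (a e.1 * a e.2 + r)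
  set T : (ι → F) → ℝ := fun a ↦ ∑ x, ∏ j ∈ N, χ (x * a j + r)
  have hN : N.Nonempty := by
    obtain ⟨e, he, hei⟩ := mem_image.mp ((t.image Prod.fst).min'_mem (ht.image _))
    exact ⟨e.2, mem_image_of_mem _ (mem_filter.mpr ⟨he, hei⟩)⟩
  have split (a : ι → F) (x : F) :
      ∏ e ∈ t, χ (Function.update a i x e.1 * Function.update a i x e.2 + r) =
        R a * ∏ j ∈ N, χ (x * a j + r) := by
    rw [← prod_filter_not_mul_prod_filter t (·.1 = i)]
    congr 1
    · refine prod_congr rfl fun e he ↦ ?_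
      obtain ⟨he, hei⟩ := mem_filter.mp he
      rw [Function.update_of_ne hei,
        Function.update_of_ne ((hi e he).trans_lt (hlt e he)).ne']
    · rw [prod_image fun e he e' he' h ↦
        Prod.ext ((mem_filter.mp he).2.trans (mem_filter.mp he').2.symm) h]
      refine prod_congr rfl fun e he ↦ ?_
      obtain ⟨he, hei⟩ := mem_filter.mp he
      rw [hei, Function.update_self, Function.update_of_ne (hei ▸ hlt e he).ne']
  have hR (a : ι → F) : R a ^ 2 ≤ 1 := by
    refine (sq_le_one_iff_abs_le_one _).mpr ?_
    rw [abs_prod]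
    exact prod_le_one (fun _ _ ↦ abs_nonneg _) fun _ _ ↦ abs_le_one _
  calc (q * ∑ a : ι → F, ∏ e ∈ t, χ (a e.1 * a e.2 + r)) ^ 2
      = (∑ a, R a * T a) ^ 2 := by
        rw [← nsmul_eq_mul, ← Fintype.sum_sum_update _ i]
        simp_rw [split, ← mul_sum, T]
    _ ≤ (∑ a, R a ^ 2) * ∑ a, T a ^ 2 := sum_mul_sq_le_sq_mul_sq _ _ _
    _ ≤ (∑ _a : ι → F, 1) * (2 * q ^ (n + 1)) := by
        gcongr with a
        · exact hR a
        · exact sum_sq_sum_prod_mul_add_le hF hr hN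
    _ = 2 * q ^ (2 * n + 1) := by
        simp only [sum_const, card_univ, Fintype.card_pi, prod_const, nsmul_eq_mul,
          Nat.cast_pow, mul_one, q, n]
        ring

lemma abs_card_sub_sum_prod_le {r : F} (hr : r ≠ 0) {ι : Type*} [Fintype ι] [DecidableEq ι]
    {E : Finset (ι × ι)} (hE : ∀ e ∈ E, e.1 ≠ e.2) :
    (Fintype.card F : ℝ) *
        |(#{a : ι → F | ∀ e ∈ E, IsSquare (a e.1 * a e.2 + r)} : ℝ) -
          ∑ a : ι → F, ∏ e ∈ E, (1 + χ (a e.1 * a e.2 + r)) / 2| ≤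
      #E * (Fintype.card F : ℝ) ^ Fintype.card ι := by
  have hcount : (#{a : ι → F | ∀ e ∈ E, IsSquare (a e.1 * a e.2 + r)} : ℝ) =
      ∑ a : ι → F, ∏ e ∈ E, if IsSquare (a e.1 * a e.2 + r) then (1 : ℝ) else 0 := by
    rw [natCast_card_filter]
    refine sum_congr rfl fun a _ ↦ ?_
    rw [prod_boole]
    congr
  have hpoint (a : ι → F) :
      |(∏ e ∈ E, if IsSquare (a e.1 * a e.2 + r) then (1 : ℝ) else 0) -
          ∏ e ∈ E, (1 + χ (a e.1 * a e.2 + r)) / 2| ≤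
        ∑ e ∈ E, if a e.1 * a e.2 + r = 0 then (1 : ℝ) else 0 := by
    refine (abs_prod_sub_prod_le_card_filter_ne (fun e _ ↦ by split_ifs <;> norm_num)
      fun e _ ↦ ?_).trans ?_
    · have := abs_le.mp (abs_le_one (a e.1 * a e.2 + r))
      constructor <;> linarith
    · rw [sum_boole, Nat.cast_le]
      exact card_le_card (monotone_filter_right _ fun e _ ↦ not_imp_comm.mp
        (indicator_isSquare_eq ·))
  calc (Fintype.card F : ℝ) * |(#{a : ι → F | ∀ e ∈ E, IsSquare (a e.1 * a e.2 + r)} : ℝ) -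
          ∑ a : ι → F, ∏ e ∈ E, (1 + χ (a e.1 * a e.2 + r)) / 2|
      ≤ Fintype.card F * ∑ a : ι → F, ∑ e ∈ E, if a e.1 * a e.2 + r = 0 then (1 : ℝ) else 0 := by
        rw [hcount, ← sum_sub_distrib]
        gcongr
        exact (abs_sum_le_sum_abs _ _).trans (sum_le_sum fun a _ ↦ hpoint a)
    _ = ∑ e ∈ E, ((#{a : ι → F | a e.1 * a e.2 + r = 0} * Fintype.card F : ℕ) : ℝ) := by
        rw [sum_comm, mul_sum]
        refine sum_congr rfl fun e _ ↦ ?_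
        rw [sum_boole]
        push_cast
        ring
    _ ≤ ∑ _e ∈ E, (Fintype.card F : ℝ) ^ Fintype.card ι := by
        gcongr with e he
        exact_mod_cast card_filter_mul_add_eq_zero_mul_le hr (hE e he)
    _ = #E * (Fintype.card F : ℝ) ^ Fintype.card ι := by rw [sum_const, nsmul_eq_mul]

lemma abs_sum_prod_one_add_div_two_sub_le (hF : ringChar F ≠ 2) {r : F} (hr : r ≠ 0) {ι : Type*}
    [Fintype ι] [LinearOrder ι] {E : Finset (ι × ι)} (hE : ∀ e ∈ E, e.1 < e.2) :
    (Fintype.card F : ℝ) *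
        |∑ a : ι → F, ∏ e ∈ E, (1 + χ (a e.1 * a e.2 + r)) / 2 -
          (Fintype.card F : ℝ) ^ Fintype.card ι / 2 ^ #E| ≤
      2 * (Fintype.card F : ℝ) ^ Fintype.card ι * √(Fintype.card F) := by
  set q : ℝ := (Fintype.card F : ℝ)
  set n := Fintype.card ι
  set H : Finset (ι × ι) → ℝ := fun t ↦ ∑ a : ι → F, ∏ e ∈ t, χ (a e.1 * a e.2 + r)
  have hq : 0 ≤ q := by positivity
  have hH (t) (ht : t ∈ E.powerset.erase ∅) : q * |H t| ≤ 2 * q ^ n * √q := by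
    obtain ⟨hne, hsub⟩ := mem_erase.mp ht
    have hsq : (q * H t) ^ 2 ≤ (2 * q ^ n * √q) ^ 2 := calc
      (q * H t) ^ 2 ≤ 2 * q ^ (2 * n + 1) :=
          sq_card_mul_sum_prod_mul_add_le hF hr (nonempty_iff_ne_empty.mpr hne)
            fun e he ↦ hE e (mem_powerset.mp hsub he)
      _ ≤ (2 * q ^ n * √q) ^ 2 := by
          rw [mul_pow, mul_pow, Real.sq_sqrt hq, ← pow_mul, pow_succ, mul_comm n 2]
          nlinarith [pow_nonneg hq (2 * n), hq]
    simpa only [abs_mul, abs_of_nonneg hq] using abs_le_of_sq_le_sq hsq (by positivity)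
  have expand : ∑ a : ι → F, ∏ e ∈ E, (1 + χ (a e.1 * a e.2 + r)) / 2 =
      (q ^ n + ∑ t ∈ E.powerset.erase ∅, H t) / 2 ^ #E := by
    simp_rw [prod_div_distrib, prod_const, prod_one_add, ← sum_div]
    rw [sum_comm, ← add_sum_erase _ _ (empty_mem_powerset E)]
    simp [q, n, H]
  calc q * |∑ a : ι → F, ∏ e ∈ E, (1 + χ (a e.1 * a e.2 + r)) / 2 - q ^ n / 2 ^ #E|
      = q * |∑ t ∈ E.powerset.erase ∅, H t| / 2 ^ #E := by
        rw [expand, add_div, add_sub_cancel_left, abs_div,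
          abs_of_pos (a := (2 : ℝ) ^ #E) (by positivity), mul_div]
    _ ≤ (∑ t ∈ E.powerset.erase ∅, q * |H t|) / 2 ^ #E := by
        rw [← mul_sum]
        gcongr
        exact abs_sum_le_sum_abs _ _
    _ ≤ (∑ _t ∈ E.powerset.erase ∅, 2 * q ^ n * √q) / 2 ^ #E := by
        gcongr ?_ / _
        exact sum_le_sum hH
    _ ≤ 2 ^ #E * (2 * q ^ n * √q) / 2 ^ #E := by
        rw [sum_const, nsmul_eq_mul]
        gcongr
        exact_mod_cast card_erase_le.trans_eq (card_powerset E)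
    _ = 2 * q ^ n * √q := by field_simp

end realQuadraticChar

lemma Fin.card_filter_fst_lt_snd (m : ℕ) :
    #{e : Fin m × Fin m | e.1 < e.2} = m * (m - 1) / 2 := by
  rw [card_filter, Fintype.sum_prod_type_right]
  simp only [← card_filter, filter_gt_eq_Iio, Fin.card_Iio]
  rw [Fin.sum_univ_eq_sum_range (fun j ↦ j), sum_range_id]

lemma Real.rpow_natCast_sub_half_mul_self {q : ℝ} (hq : 0 < q) (m : ℕ) :
    q ^ ((m : ℝ) - 1 / 2) * q = q ^ m * √q := by
  rw [← Real.rpow_add_one hq.ne', Real.sqrt_eq_rpow, ← Real.rpow_natCast, ← Real.rpow_add hq]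
  ring_nf

lemma abs_card_isSquare_on_edges_sub_le {F : Type*} [Field F] [Fintype F] [DecidableEq F]
    (hF : ringChar F ≠ 2) {r : F} (hr : r ≠ 0) {ι : Type*} [Fintype ι] [LinearOrder ι]
    {E : Finset (ι × ι)} (hE : ∀ e ∈ E, e.1 < e.2) :
    |(#{a : ι → F | ∀ e ∈ E, IsSquare (a e.1 * a e.2 + r)} : ℝ) -
        (Fintype.card F : ℝ) ^ Fintype.card ι / 2 ^ #E| ≤
      (#E + 2) * (Fintype.card F : ℝ) ^ ((Fintype.card ι : ℝ) - 1 / 2) := by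
  set q : ℝ := (Fintype.card F : ℝ)
  set n := Fintype.card ι
  set N : ℝ := (#{a : ι → F | ∀ e ∈ E, IsSquare (a e.1 * a e.2 + r)} : ℝ)
  set A := ∑ a : ι → F, ∏ e ∈ E, (1 + realQuadraticChar F (a e.1 * a e.2 + r)) / 2
  have hq1 : 1 ≤ q := Nat.one_le_cast.mpr Fintype.card_pos
  have hq : 0 < q := one_pos.trans_le hq1
  have hsqrt : q ^ n ≤ q ^ n * √q :=
    le_mul_of_one_le_right (by positivity) (Real.one_le_sqrt.mpr hq1)
  refine le_of_mul_le_mul_right ?_ hq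
  calc |N - q ^ n / 2 ^ #E| * q ≤ q * |N - A| + q * |A - q ^ n / 2 ^ #E| := by
        rw [mul_comm, ← mul_add]
        exact mul_le_mul_of_nonneg_left (abs_sub_le _ _ _) hq.le
    _ ≤ #E * q ^ n + 2 * q ^ n * √q :=
        add_le_add (realQuadraticChar.abs_card_sub_sum_prod_le hr fun e he ↦ (hE e he).ne)
          (realQuadraticChar.abs_sum_prod_one_add_div_two_sub_le hF hr hE)
    _ ≤ (#E + 2) * (q ^ n * √q) := by
        nlinarith [mul_le_mul_of_nonneg_left hsqrt (Nat.cast_nonneg (α := ℝ) #E)]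
    _ = (#E + 2) * q ^ ((n : ℝ) - 1 / 2) * q := by
        rw [mul_assoc, Real.rpow_natCast_sub_half_mul_self hq]

theorem diophantine_tuples_count_half_power_general (m : ℕ) :
    ∃ C : ℝ, 0 < C ∧
      ∀ (F : Type) [Field F] [Fintype F],
        Odd (Fintype.card F) →
        ∀ r : F, r ≠ 0 →
          |(Nat.card {a : Fin m → F //
                ∀ i j : Fin m, i < j → IsSquare (a i * a j + r)} : ℝ)
              - (Fintype.card F : ℝ) ^ m / 2 ^ (m * (m - 1) / 2)|
            ≤ C * (Fintype.card F : ℝ) ^ ((m : ℝ) - 1 / 2) := by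
  classical
  refine ⟨(m * (m - 1) / 2 : ℕ) + 2, by positivity, fun F _ _ hodd r hr ↦ ?_⟩
  have hF : ringChar F ≠ 2 := fun h ↦
    Nat.not_even_iff_odd.mpr hodd (Nat.even_iff.mpr (FiniteField.even_card_iff_char_two.mp h))
  have hN : Nat.card {a : Fin m → F // ∀ i j : Fin m, i < j → IsSquare (a i * a j + r)} =
      #{a : Fin m → F | ∀ e ∈ ({e | e.1 < e.2} : Finset (Fin m × Fin m)),
        IsSquare (a e.1 * a e.2 + r)} := by
    rw [Nat.card_eq_fintype_card, Fintype.card_subtype]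
    simp
  have key := abs_card_isSquare_on_edges_sub_le hF hr (E := {e : Fin m × Fin m | e.1 < e.2})
    fun e he ↦ (mem_filter.mp he).2
  rwa [Fin.card_filter_fst_lt_snd, Fintype.card_fin, ← hN] at key

/-- For every integer `m ≥ 4` there is a constant `C = C(m) > 0` such that for every
finite field `F` of odd cardinality `q` (an odd prime power) and every `r ∈ F^*`,
the number `N_r(m,q)` of Diophantine `m`-tuples in `F` with shift `r`
(ordered `m`-tuples `(a_1, …, a_m)` with `a_i a_j + r` a square for all `i < j`)
satisfies `|N_r(m,q) − 2^{−m(m−1)/2} q^m| ≤ C q^{m−1/2}`. -/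
theorem diophantine_tuples_count_half_power (m : ℕ) (hm : 4 ≤ m) :
    ∃ C : ℝ, 0 < C ∧
      ∀ (F : Type) [Field F] [Fintype F],
        Odd (Fintype.card F) →
        ∀ r : F, r ≠ 0 →
          |(Nat.card {a : Fin m → F //
                ∀ i j : Fin m, i < j → IsSquare (a i * a j + r)} : ℝ)
              - (Fintype.card F : ℝ) ^ m / 2 ^ (m * (m - 1) / 2)|
            ≤ C * (Fintype.card F : ℝ) ^ ((m : ℝ) - 1 / 2) :=
  diophantine_tuples_count_half_power_general m
end
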